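/- Let M be a matroid, let S, T be disjoint subsets of E(M), let k := κ_M(S,T), and let U ⊆ E(M) be a set with S ⊆ U, U ∩ T = ∅, and λ_M(U) = k. If e ∈ E(M) − (T ∪ U) is non-contractible with respect to (S,T) (i.e., κ_{M/e}(S,T) < k), then e is non-contractible with respect to (U,T) (i.e., κ_{M/e}(U,T) < κ_M(U,T) = k). -/

import Mathlib

/-!
Write `λ'` for the connectivity function of `M / e`; always `λ'(Z) ≤ λ(Z)` for `e ∉ Z`. Take `X`
with `S ⊆ X ⊆ E(M / e) - T` and `λ'(X) < k`, and suppose `κ_{M/e}(U,T) ≥ k`. Then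
`λ'(U) = λ(U) = k`, i.e. `e` adds the full `r({e})` to the rank of `U`; by submodularity of `r`
it does so for `X ∩ U` too, whence `λ'(X ∩ U) = λ(X ∩ U) ≥ k`. Submodularity of `λ'` now gives
`λ'(X ∪ U) < k`, contradicting `κ_{M/e}(U,T) ≥ k`. If `r(M) = ∞` then `λ ≡ 0` by truncated
subtraction, so `κ_{M/e}(S,T) < k` is impossible.
-/

open Set Matroid

namespace Intertwine

variable {α : Type*}

/-- The (extended) rank of a set in a matroid: the supremum of the cardinalities of its
independent subsets. -/
noncomputable def eRk (M : Matroid α) (X : Set α) : ℕ∞ :=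
  ⨆ I ∈ {I : Set α | M.Indep I ∧ I ⊆ X}, I.encard

/-- The connectivity function `λ_M(X) = r(X) + r(E \ X) - r(M)`. -/
noncomputable def lam (M : Matroid α) (X : Set α) : ℕ∞ :=
  eRk M X + eRk M (M.E \ X) - eRk M M.E

/-- The connectivity between `S` and `T`:
`κ_M(S,T) = min {λ_M(X) : S ⊆ X ⊆ E \ T}`. -/
noncomputable def kap (M : Matroid α) (S T : Set α) : ℕ∞ :=
  ⨅ X ∈ {X : Set α | S ⊆ X ∧ X ⊆ M.E \ T}, lam M X

/-- Deletion of a set of elements. -/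
def del (M : Matroid α) (D : Set α) : Matroid α := M ↾ (M.E \ D)

/-- Contraction of a set of elements, via duality: `M / C = (M* \ C)*`. -/
def con (M : Matroid α) (C : Set α) : Matroid α := (del M✶ C)✶

/-- `N` is a minor of `M` if `N = M / C \ D` for disjoint subsets `C, D` of `E(M)`. -/
def IsMinor (N M : Matroid α) : Prop :=
  ∃ C D : Set α, C ⊆ M.E ∧ D ⊆ M.E ∧ Disjoint C D ∧ N = del (con M C) D

/-- `M` is representable over the field `𝔽` if its independent sets are exactly the
sets on which some vector-valued function is linearly independent. -/
def IsRepresentable (𝔽 : Type*) [Field 𝔽] (M : Matroid α) : Prop :=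
  ∃ (B : Set α) (v : α → (B →₀ 𝔽)),
    ∀ I : Set α, M.Indep I ↔ I ⊆ M.E ∧ LinearIndependent 𝔽 (fun x : I ↦ v x)

end Intertwine

namespace Matroid

variable {α : Type*} {M : Matroid α} {e : α} {Z U : Set α}

lemma eRk_contract_add_eRk (M : Matroid α) (C X : Set α) :
    (M ／ C).eRk X + M.eRk C = M.eRk (X ∪ C) := by
  obtain ⟨J, hJ⟩ := M.exists_isBasis' C
  obtain ⟨I, hI, hJI⟩ :=
    hJ.indep.subset_isBasis'_of_subset (hJ.subset.trans subset_union_right)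
  have hIC : (M ／ C).IsBasis' (I \ C) ((X ∪ C) \ C) :=
    hI.contract_isBasis' hJ (hI.indep.subset (union_subset sdiff_subset hJI))
  have hIJ : I ∩ C = J :=
    (hJ.eq_of_subset_indep (hI.indep.subset inter_subset_left)
      (subset_inter hJI hJ.subset) inter_subset_right).symm
  have hX : (M ／ C).eRk ((X ∪ C) \ C) = (M ／ C).eRk X := by
    rw [← eRk_inter_ground, ← eRk_inter_ground (M ／ C) X, contract_ground]
    congr 1
    ext x
    simp only [mem_inter_iff, mem_sdiff, mem_union]
    tauto
  rw [← hX, ← hIC.encard_eq_eRk, ← hJ.encard_eq_eRk, ← hIJ, encard_sdiff_add_encard_inter,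
    hI.encard_eq_eRk]

lemma eRk_ne_top (M : Matroid α) [M.RankFinite] (X : Set α) : M.eRk X ≠ ⊤ :=
  (M.isRkFinite_set X).eRk_lt_top.ne

lemma eRk_add_eRk_singleton_le_eRk_insert_of_subset [M.RankFinite] (hZU : Z ⊆ U)
    (hU : M.eRk U + M.eRk {e} ≤ M.eRk (insert e U)) :
    M.eRk Z + M.eRk {e} ≤ M.eRk (insert e Z) := by
  have hsub := M.eRk_inter_add_eRk_union_le (insert e Z) U
  rw [insert_union, union_eq_self_of_subset_left hZU] at hsub
  have hZ : M.eRk Z ≤ M.eRk (insert e Z ∩ U) :=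
    M.eRk_mono (subset_inter (subset_insert e Z) hZU)
  refine (ENat.add_le_add_iff_right (M.eRk_ne_top U)).1 ?_
  calc M.eRk Z + M.eRk {e} + M.eRk U = M.eRk Z + (M.eRk U + M.eRk {e}) := by ring
    _ ≤ M.eRk (insert e Z ∩ U) + M.eRk (insert e U) := add_le_add hZ hU
    _ ≤ M.eRk (insert e Z) + M.eRk U := hsub

end Matroid

namespace Intertwine

variable {α : Type*} {M : Matroid α} {S T U X Z : Set α} {e : α} {c : ℕ∞}

lemma eRk_eq_eRk (M : Matroid α) (X : Set α) : eRk M X = M.eRk X := by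
  refine le_antisymm (iSup₂_le fun I hI => hI.1.encard_le_eRk_of_subset hI.2) ?_
  obtain ⟨I, hI⟩ := M.exists_isBasis' X
  rw [← hI.encard_eq_eRk]
  exact le_iSup₂_of_le I ⟨hI.indep, hI.subset⟩ le_rfl

lemma con_eq_contract (M : Matroid α) (C : Set α) : con M C = M ／ C := rfl

lemma lam_add_eRank (M : Matroid α) (X : Set α) :
    lam M X + M.eRank = M.eRk X + M.eRk (M.E \ X) := by
  have hle : M.eRank ≤ M.eRk X + M.eRk (M.E \ X) := by
    rw [← M.eRk_union_ground X, ← union_sdiff_self]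
    exact M.eRk_union_le_eRk_add_eRk X (M.E \ X)
  simp only [lam, eRk_eq_eRk, eRk_ground]
  exact tsub_add_cancel_of_le hle

lemma lam_eq_zero_of_eRank_eq_top (hM : M.eRank = ⊤) (X : Set α) : lam M X = 0 := by
  simp only [lam, eRk_eq_eRk, eRk_ground, hM]
  exact tsub_eq_zero_of_le le_top

lemma lam_ne_top (M : Matroid α) [M.RankFinite] (X : Set α) : lam M X ≠ ⊤ :=
  ne_top_of_le_ne_top (WithTop.add_ne_top.2 ⟨M.eRk_ne_top X, M.eRk_ne_top _⟩)
    (le_self_add.trans (lam_add_eRank M X).le)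

lemma lam_union_add_lam_inter_le (M : Matroid α) [M.RankFinite] (X Y : Set α) :
    lam M (X ∪ Y) + lam M (X ∩ Y) ≤ lam M X + lam M Y := by
  have hR : M.eRank + M.eRank ≠ ⊤ :=
    WithTop.add_ne_top.2 ⟨M.eRank_ne_top_iff.2 ‹_›, M.eRank_ne_top_iff.2 ‹_›⟩
  refine (ENat.add_le_add_iff_right hR).1 ?_
  calc lam M (X ∪ Y) + lam M (X ∩ Y) + (M.eRank + M.eRank)
      = (lam M (X ∪ Y) + M.eRank) + (lam M (X ∩ Y) + M.eRank) := by ring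
    _ = (M.eRk (X ∩ Y) + M.eRk (X ∪ Y)) + (M.eRk (M.E \ (X ∪ Y)) + M.eRk (M.E \ (X ∩ Y))) := by
        rw [lam_add_eRank, lam_add_eRank]; ring
    _ ≤ (M.eRk X + M.eRk Y) + (M.eRk (M.E \ X) + M.eRk (M.E \ Y)) :=
        add_le_add (M.eRk_inter_add_eRk_union_le X Y)
          (M.eRk_compl_union_add_eRk_compl_inter_le X Y)
    _ = (M.eRk X + M.eRk (M.E \ X)) + (M.eRk Y + M.eRk (M.E \ Y)) := by ring
    _ = lam M X + lam M Y + (M.eRank + M.eRank) := by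
        rw [← lam_add_eRank, ← lam_add_eRank]; ring

/-- Contracting `e` lowers `λ(Z)` exactly when `e` is a nonloop in the closure of `Z`. -/
lemma lam_contractElem_add_eRk_add_eRk [M.RankFinite] (he : e ∈ M.E) (heZ : e ∉ Z) :
    lam (M ／ {e}) Z + M.eRk Z + M.eRk {e} = lam M Z + M.eRk (insert e Z) := by
  have hZ : (M ／ {e}).eRk Z + M.eRk {e} = M.eRk (insert e Z) := by
    rw [eRk_contract_add_eRk, union_singleton]
  have hcompl : (M ／ {e}).eRk ((M ／ {e}).E \ Z) + M.eRk {e} = M.eRk (M.E \ Z) := by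
    rw [eRk_contract_add_eRk, contract_ground]
    congr 1
    ext x
    simp only [mem_union, mem_sdiff, mem_singleton_iff]
    constructor
    · rintro (⟨⟨hx, -⟩, hxZ⟩ | rfl)
      exacts [⟨hx, hxZ⟩, ⟨he, heZ⟩]
    · rintro ⟨hx, hxZ⟩
      by_cases hxe : x = e
      exacts [Or.inr hxe, Or.inl ⟨⟨hx, hxe⟩, hxZ⟩]
  have hE : (M ／ {e}).eRank + M.eRk {e} = M.eRank := by
    rw [← eRk_ground, eRk_contract_add_eRk, contract_ground,
      sdiff_union_of_subset (singleton_subset_iff.2 he), eRk_ground]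
  refine (WithTop.add_right_inj (M.eRank_ne_top_iff.2 ‹_›)).1 ?_
  calc lam (M ／ {e}) Z + M.eRk Z + M.eRk {e} + M.eRank
      = (lam (M ／ {e}) Z + (M ／ {e}).eRank) + M.eRk Z + M.eRk {e} + M.eRk {e} := by
        rw [← hE]; ring
    _ = ((M ／ {e}).eRk Z + M.eRk {e}) + ((M ／ {e}).eRk ((M ／ {e}).E \ Z) + M.eRk {e})
          + M.eRk Z := by
        rw [lam_add_eRank]; ring
    _ = (lam M Z + M.eRank) + M.eRk (insert e Z) := by
        rw [hZ, hcompl, lam_add_eRank]; ring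
    _ = lam M Z + M.eRk (insert e Z) + M.eRank := by ring

lemma lam_contractElem_le [M.RankFinite] (he : e ∈ M.E) (heZ : e ∉ Z) :
    lam (M ／ {e}) Z ≤ lam M Z := by
  refine (ENat.add_le_add_iff_right
    (WithTop.add_ne_top.2 ⟨M.eRk_ne_top Z, M.eRk_ne_top {e}⟩)).1 ?_
  calc lam (M ／ {e}) Z + (M.eRk Z + M.eRk {e}) = lam M Z + M.eRk (insert e Z) := by
        rw [← add_assoc, lam_contractElem_add_eRk_add_eRk he heZ]
    _ ≤ lam M Z + (M.eRk Z + M.eRk {e}) := by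
        rw [insert_eq, add_comm (M.eRk Z)]
        gcongr
        exact M.eRk_union_le_eRk_add_eRk {e} Z

lemma lam_le_lam_contractElem_of_subset [M.RankFinite] (he : e ∈ M.E) (heU : e ∉ U)
    (hZU : Z ⊆ U) (hU : lam M U ≤ lam (M ／ {e}) U) : lam M Z ≤ lam (M ／ {e}) Z := by
  have hrU : M.eRk U + M.eRk {e} ≤ M.eRk (insert e U) := by
    refine (ENat.add_le_add_iff_left (lam_ne_top M U)).1 ?_
    calc lam M U + (M.eRk U + M.eRk {e}) ≤ lam (M ／ {e}) U + (M.eRk U + M.eRk {e}) :=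
          by gcongr
      _ = lam M U + M.eRk (insert e U) := by
          rw [← add_assoc, lam_contractElem_add_eRk_add_eRk he heU]
  have hrZ := eRk_add_eRk_singleton_le_eRk_insert_of_subset hZU hrU
  refine (ENat.add_le_add_iff_right
    (WithTop.add_ne_top.2 ⟨M.eRk_ne_top Z, M.eRk_ne_top {e}⟩)).1 ?_
  calc lam M Z + (M.eRk Z + M.eRk {e}) ≤ lam M Z + M.eRk (insert e Z) := by gcongr
    _ = lam (M ／ {e}) Z + (M.eRk Z + M.eRk {e}) := by
        rw [← add_assoc, lam_contractElem_add_eRk_add_eRk he (fun h => heU (hZU h))]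

lemma kap_le_lam (hSX : S ⊆ X) (hXT : X ⊆ M.E \ T) : kap M S T ≤ lam M X :=
  iInf₂_le X ⟨hSX, hXT⟩

lemma kap_lt_iff : kap M S T < c ↔ ∃ X, (S ⊆ X ∧ X ⊆ M.E \ T) ∧ lam M X < c := by
  simp only [kap, iInf_lt_iff, mem_ofPred_eq, exists_prop]

lemma kap_mono_left (hSU : S ⊆ U) : kap M S T ≤ kap M U T :=
  le_iInf₂ fun _ hX => kap_le_lam (hSU.trans hX.1) hX.2

end Intertwine

open Intertwine in
theorem non_contractible_grow_general {α : Type*} (M : Matroid α)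
    (S T : Set α)
    (k : ℕ∞) (hk : kap M S T = k)
    (U : Set α) (hU : U ⊆ M.E) (hSU : S ⊆ U) (hUT : Disjoint U T) (hlamU : lam M U = k)
    (e : α) (he : e ∈ M.E \ (T ∪ U)) (hnc : kap (con M {e}) S T < k) :
    kap M U T = k ∧ kap (con M {e}) U T < k := by
  have hUT' : U ⊆ M.E \ T := subset_sdiff.2 ⟨hU, hUT⟩
  refine ⟨le_antisymm (hlamU ▸ kap_le_lam subset_rfl hUT') (hk ▸ kap_mono_left hSU), ?_⟩
  have : M.RankFinite := by
    refine M.eRank_ne_top_iff.1 fun hM => ?_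
    rw [← hlamU, lam_eq_zero_of_eRank_eq_top hM] at hnc
    exact not_lt_zero hnc
  obtain ⟨heE, heTU⟩ := he
  have heU : e ∉ U := fun h => heTU (Or.inr h)
  rw [con_eq_contract] at hnc ⊢
  obtain ⟨X, ⟨hSX, hXT⟩, hX⟩ := kap_lt_iff.1 hnc
  by_contra! hle
  have hUTe : U ⊆ (M ／ {e}).E \ T :=
    subset_sdiff.2 ⟨subset_sdiff.2 ⟨hU, disjoint_singleton_right.2 heU⟩, hUT⟩
  have hlamU' : lam (M ／ {e}) U = k := le_antisymm (hlamU ▸ lam_contractElem_le heE heU)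
    (hle.trans (kap_le_lam subset_rfl hUTe))
  have hXU : k ≤ lam (M ／ {e}) (X ∪ U) :=
    hle.trans (kap_le_lam subset_union_right (union_subset hXT hUTe))
  have hXiU : k ≤ lam (M ／ {e}) (X ∩ U) :=
    (hk ▸ kap_le_lam (subset_inter hSX hSU) (inter_subset_right.trans hUT')).trans
      (lam_le_lam_contractElem_of_subset heE heU inter_subset_right (hlamU.trans hlamU'.symm).le)
  have hsub := lam_union_add_lam_inter_le (M ／ {e}) X U
  rw [hlamU'] at hsub
  exact ((ENat.add_lt_add_iff_right (hlamU ▸ lam_ne_top M U)).2 hX).not_ge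
    ((add_le_add hXU hXiU).trans hsub)

open Intertwine in
/-- If `U` is an `S−T`-separating set of order `k+1` and `e ∈ E(M) \ (T ∪ U)` is
non-contractible with respect to `(S,T)`, then `κ_M(U,T) = k` and `e` is non-contractible
with respect to `(U,T)`. -/
theorem non_contractible_grow {α : Type*} (M : Matroid α)
    (S T : Set α) (hS : S ⊆ M.E) (hT : T ⊆ M.E) (hST : Disjoint S T)
    (k : ℕ∞) (hk : kap M S T = k)
    (U : Set α) (hU : U ⊆ M.E) (hSU : S ⊆ U) (hUT : Disjoint U T) (hlamU : lam M U = k)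
    (e : α) (he : e ∈ M.E \ (T ∪ U)) (hnc : kap (con M {e}) S T < k) :
    kap M U T = k ∧ kap (con M {e}) U T < k :=
  non_contractible_grow_general M S T k hk U hU hSU hUT hlamU e he hnc
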